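/- (Corollary 8) Let Σ be a finite d-dimensional simplicial complex (d ≥ 1) with β_d(Σ) = 0 such that the space Z_{d−1}(Σ^{(−1)}) of Z_2 (d−1)-cycles of the (d−1)-skeleton Σ^{(−1)} admits a 2-complete basis (by Theorem 2 of the paper, this holds whenever Σ is PL embeddable into ℝ^{d}). Then (d+1)·(f_d(Σ) + 1) ≤ 2·f_{d−1}(Σ). -/

import Mathlib

open Finset

/-- A finite simplicial complex on a finite vertex type `V`:
a finite nonempty collection of nonempty finite sets (faces)
closed under taking nonempty subsets. -/
structure SComplex (V : Type) [DecidableEq V] [Fintype V] where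
  faces : Finset (Finset V)
  nonempty : faces.Nonempty
  no_empty : ∀ σ ∈ faces, σ ≠ ∅
  down_closed : ∀ σ ∈ faces, ∀ τ, τ ⊆ σ → τ ≠ ∅ → τ ∈ faces

namespace SComplex

variable {V : Type} [DecidableEq V] [Fintype V]

/-- The set of faces of dimension `i` (i.e. of cardinality `i+1`). -/
def facesDim (K : SComplex V) (i : ℕ) : Finset (Finset V) :=
  K.faces.filter (fun σ => σ.card = i + 1)

/-- `fnum K i` is the face number `f_i`. -/
def fnum (K : SComplex V) (i : ℕ) : ℕ := (K.facesDim i).card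

/-- The space of `Z_2` `i`-chains: functions from the `i`-faces to `Z_2`. -/
abbrev Chains (K : SComplex V) (i : ℕ) : Type := {σ // σ ∈ K.facesDim i} → ZMod 2

/-- The boundary map `∂_i : C_i → C_{i-1}` (and `∂_0 = 0`): the value of `∂ c` on an
`(i-1)`-face `τ` is the sum over `i`-faces `σ ⊇ τ` of `c σ`. -/
def boundary (K : SComplex V) (i : ℕ) : Chains K i →ₗ[ZMod 2] Chains K (i - 1) :=
  if i = 0 then 0 else
  { toFun := fun c τ =>
      ∑ σ : {σ // σ ∈ K.facesDim i}, if (τ : Finset V) ⊆ (σ : Finset V) then c σ else 0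
    map_add' := by
      intro c d
      funext τ
      show (∑ σ : {σ // σ ∈ K.facesDim i}, _) = _
      rw [Pi.add_apply, ← Finset.sum_add_distrib]
      apply Finset.sum_congr rfl
      intro σ _
      by_cases h : (τ : Finset V) ⊆ (σ : Finset V) <;> simp [h]
    map_smul' := by
      intro a c
      funext τ
      show (∑ σ : {σ // σ ∈ K.facesDim i}, _) = _
      rw [RingHom.id_apply, Pi.smul_apply, smul_eq_mul, Finset.mul_sum]
      apply Finset.sum_congr rfl
      intro σ _
      by_cases h : (τ : Finset V) ⊆ (σ : Finset V) <;> simp [h] }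

/-- The `i`-th `Z_2` Betti number: `dim ker ∂_i − rank ∂_{i+1}`. -/
noncomputable def betti (K : SComplex V) (i : ℕ) : ℕ :=
  Module.finrank (ZMod 2) (LinearMap.ker (K.boundary i)) -
    Module.finrank (ZMod 2) (LinearMap.range (K.boundary (i + 1)))

/-- The number of `i`-faces in the support of a chain. -/
def suppCard {K : SComplex V} {i : ℕ} (c : Chains K i) : ℕ :=
  (Finset.univ.filter (fun σ => c σ ≠ 0)).card

/-- The girth: the minimal support size of a nonzero `d`-cycle. -/
noncomputable def girth (K : SComplex V) (d : ℕ) : ℕ :=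
  sInf {n | ∃ c : Chains K d, c ∈ LinearMap.ker (K.boundary d) ∧ c ≠ 0 ∧ suppCard c = n}

/-- `Z_d(K)` admits an `m`-complete basis: a basis of the space of `d`-cycles such that every
`d`-face lies in the support of at most `m` basis elements. -/
def HasCompleteBasis (K : SComplex V) (d m : ℕ) : Prop :=
  ∃ (ι : Type) (_ : Fintype ι) (b : Module.Basis ι (ZMod 2) (LinearMap.ker (K.boundary d))),
    ∀ σ : {σ // σ ∈ K.facesDim d},
      (Finset.univ.filter (fun i : ι => (b i).1 σ ≠ 0)).card ≤ m

/-- `K` is `d`-dimensional: `d` is the maximal dimension of a face. -/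
def IsDim (K : SComplex V) (d : ℕ) : Prop :=
  (∀ σ ∈ K.faces, σ.card ≤ d + 1) ∧ ∃ σ ∈ K.faces, σ.card = d + 1

/-- `K` is pure `d`-dimensional: every face is contained in a `d`-face. -/
def IsPure (K : SComplex V) (d : ℕ) : Prop :=
  ∀ σ ∈ K.faces, ∃ τ ∈ K.faces, σ ⊆ τ ∧ τ.card = d + 1

/-- A `d`-dimensional complex is balanced if its vertices can be colored with `d+1` colors
so that the coloring is injective on every face. -/
def IsBalanced (K : SComplex V) (d : ℕ) : Prop :=
  ∃ coloring : V → Fin (d + 1), ∀ σ ∈ K.faces, Set.InjOn coloring (σ : Set V)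

/-- The `d`-skeleton of `K`: all faces of dimension at most `d`. -/
def skeleton (K : SComplex V) (d : ℕ) : SComplex V where
  faces := K.faces.filter (fun σ => σ.card ≤ d + 1)
  nonempty := by
    obtain ⟨σ, hσ⟩ := K.nonempty
    obtain ⟨v, hv⟩ := Finset.nonempty_iff_ne_empty.mpr (K.no_empty σ hσ)
    refine ⟨{v}, Finset.mem_filter.mpr ⟨K.down_closed σ hσ {v}
      (Finset.singleton_subset_iff.mpr hv) (Finset.singleton_ne_empty v), by simp⟩⟩
  no_empty := by
    intro σ hσ
    exact K.no_empty σ (Finset.mem_filter.mp hσ).1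
  down_closed := by
    intro σ hσ τ hτσ hτ
    rw [Finset.mem_filter] at hσ ⊢
    exact ⟨K.down_closed σ hσ.1 τ hτσ hτ, le_trans (Finset.card_le_card hτσ) hσ.2⟩

end SComplex

/-!
Since `β_d = 0` and there are no `(d+1)`-faces, `∂_d` is injective. As `∂ ∂ = 0`, it embeds `C_d`
into the space `Z` of `(d-1)`-cycles of the skeleton, so `f_d ≤ dim Z`. For `d ≥ 2` every nonzero
`(d-1)`-cycle has at least `d+1` faces. Take a 2-complete basis `b_1, …, b_z` of `Z` and let
`s = ∑ b_j`, a nonzero cycle supported on the faces lying in exactly one `supp b_j`. Counting the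
supports of `b_1, …, b_z, s` with multiplicity, each `(d-1)`-face is counted at most twice, whence
`(d+1)(z+1) ≤ 2 f_{d-1}`. For `d = 1` the image of `∂_1` lies in the kernel of the augmentation
`C_0 → ℤ/2`, so `f_1 < f_0`.
-/

theorem Finset.subset_of_erase_subset_of_erase_subset {α : Type*} [DecidableEq α]
    {s t : Finset α} {a b : α} (hab : a ≠ b) (ha : s.erase a ⊆ t) (hb : s.erase b ⊆ t) :
    s ⊆ t := by
  intro x hx
  by_cases hxa : x = a
  · exact hb (Finset.mem_erase.2 ⟨hxa ▸ hab, hx⟩)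
  · exact ha (Finset.mem_erase.2 ⟨hxa, hx⟩)

theorem ZMod.sum_eq_card_filter_ne_zero {ι : Type*} [Fintype ι] (f : ι → ZMod 2) :
    ∑ i, f i = (Finset.univ.filter fun i => f i ≠ 0).card := by
  have hone : ∀ y : ZMod 2, y ≠ 0 → y = 1 := by decide
  rw [← Finset.sum_filter_ne_zero,
    Finset.sum_congr rfl fun i hi => hone _ (Finset.mem_filter.1 hi).2, Finset.sum_const, nsmul_one]

theorem mul_card_add_one_le_of_basis_covers_twice {F ι : Type*} [Fintype F] [Fintype ι]
    [Nonempty ι] {W : Submodule (ZMod 2) (F → ZMod 2)} (b : Module.Basis ι (ZMod 2) W) {k : ℕ}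
    (hW : ∀ w ∈ W, w ≠ 0 → k ≤ (Finset.univ.filter fun x => w x ≠ 0).card)
    (hb : ∀ x, (Finset.univ.filter fun i => (b i : F → ZMod 2) x ≠ 0).card ≤ 2) :
    k * (Fintype.card ι + 1) ≤ 2 * Fintype.card F := by
  set mult : F → ℕ := fun x => (Finset.univ.filter fun i => (b i : F → ZMod 2) x ≠ 0).card
  set s : F → ZMod 2 := ∑ i, (b i : F → ZMod 2)
  have hs_mem : s ∈ W := W.sum_mem fun i _ => (b i).2
  have hs_ne : s ≠ 0 := by
    intro hs
    have hsum : ∑ i, (1 : ZMod 2) • b i = 0 := by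
      ext1
      simpa [s] using hs
    exact one_ne_zero (Fintype.linearIndependent_iff.1 b.linearIndependent _ hsum
      (Classical.arbitrary ι))
  have hsupp : (Finset.univ.filter fun x => s x ≠ 0) ⊆ Finset.univ.filter fun x => mult x = 1 := by
    intro x
    have hsx : s x = mult x := by
      simp only [s, Finset.sum_apply, ZMod.sum_eq_card_filter_ne_zero, mult]
    simp only [Finset.mem_filter, Finset.mem_univ, true_and, hsx]
    have : mult x ≤ 2 := hb x
    interval_cases mult x <;> decide
  have hdouble :
      ∑ i, (Finset.univ.filter fun x => (b i : F → ZMod 2) x ≠ 0).card = ∑ x, mult x := by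
    simp only [Finset.card_filter, mult]
    exact Finset.sum_comm
  calc k * (Fintype.card ι + 1) = ∑ _i : ι, k + k := by simp [mul_add, mul_comm]
    _ ≤ ∑ i, (Finset.univ.filter fun x => (b i : F → ZMod 2) x ≠ 0).card
          + (Finset.univ.filter fun x => s x ≠ 0).card :=
        add_le_add (Finset.sum_le_sum fun i _ => hW _ (b i).2 (by simpa using b.ne_zero i))
          (hW s hs_mem hs_ne)
    _ ≤ ∑ x, mult x + (Finset.univ.filter fun x => mult x = 1).card := by
        rw [hdouble]
        exact add_le_add le_rfl (Finset.card_le_card hsupp)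
    _ = ∑ x, (mult x + if mult x = 1 then 1 else 0) := by
        rw [Finset.card_filter, Finset.sum_add_distrib]
    _ ≤ ∑ _x : F, 2 := Finset.sum_le_sum fun x _ => by have := hb x; split_ifs <;> omega
    _ = 2 * Fintype.card F := by simp [mul_comm]

namespace SComplex

variable {V : Type} [DecidableEq V] [Fintype V]

lemma mem_facesDim {K : SComplex V} {i : ℕ} {σ : Finset V} :
    σ ∈ K.facesDim i ↔ σ ∈ K.faces ∧ σ.card = i + 1 := Finset.mem_filter

lemma boundary_apply (K : SComplex V) {i : ℕ} (hi : i ≠ 0) (c : Chains K i)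
    (τ : {σ // σ ∈ K.facesDim (i - 1)}) :
    K.boundary i c τ = ∑ σ : {σ // σ ∈ K.facesDim i}, if (τ : Finset V) ⊆ σ then c σ else 0 := by
  rw [boundary, if_neg hi]
  rfl

lemma finrank_chains (K : SComplex V) (i : ℕ) :
    Module.finrank (ZMod 2) (Chains K i) = K.fnum i := by
  rw [Module.finrank_fintype_fun_eq_card, Fintype.card_coe, fnum]

lemma skeleton_facesDim (K : SComplex V) (d : ℕ) :
    (K.skeleton d).facesDim d = K.facesDim d := by
  ext σ
  simp only [mem_facesDim, skeleton, Finset.mem_filter]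
  constructor
  · rintro ⟨⟨hσ, -⟩, hcard⟩
    exact ⟨hσ, hcard⟩
  · rintro ⟨hσ, hcard⟩
    exact ⟨⟨hσ, hcard.le⟩, hcard⟩

lemma fnum_skeleton (K : SComplex V) (d : ℕ) : (K.skeleton d).fnum d = K.fnum d := by
  rw [fnum, fnum, skeleton_facesDim]

lemma fnum_pos_of_isDim {K : SComplex V} {d : ℕ} (hdim : K.IsDim d) : 0 < K.fnum d :=
  let ⟨σ, hσ, hcard⟩ := hdim.2
  Finset.card_pos.2 ⟨σ, mem_facesDim.2 ⟨hσ, hcard⟩⟩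

lemma fnum_succ_eq_zero_of_isDim {K : SComplex V} {d : ℕ} (hdim : K.IsDim d) :
    K.fnum (d + 1) = 0 := by
  rw [fnum, Finset.card_eq_zero, Finset.eq_empty_iff_forall_notMem]
  intro σ hσ
  have hle := hdim.1 σ (mem_facesDim.1 hσ).1
  have hcard := (mem_facesDim.1 hσ).2
  omega

lemma ker_boundary_eq_bot_of_betti_eq_zero {K : SComplex V} {d : ℕ} (hdim : K.IsDim d)
    (hβ : K.betti d = 0) : LinearMap.ker (K.boundary d) = ⊥ := by
  have hrange : Module.finrank (ZMod 2) (LinearMap.range (K.boundary (d + 1))) = 0 := by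
    have := LinearMap.finrank_range_le (K.boundary (d + 1))
    rwa [finrank_chains, fnum_succ_eq_zero_of_isDim hdim, Nat.le_zero] at this
  rw [betti, hrange, Nat.sub_zero] at hβ
  exact Submodule.finrank_eq_zero.1 hβ

lemma erase_mem_facesDim {K : SComplex V} {i : ℕ} (hi : i ≠ 0) {σ : Finset V}
    (hσ : σ ∈ K.facesDim i) {v : V} (hv : v ∈ σ) : σ.erase v ∈ K.facesDim (i - 1) := by
  obtain ⟨hσK, hcard⟩ := mem_facesDim.1 hσ
  have hcard' : (σ.erase v).card = i := by rw [Finset.card_erase_of_mem hv, hcard]; rfl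
  refine mem_facesDim.2 ⟨K.down_closed σ hσK _ (Finset.erase_subset v σ) ?_, by omega⟩
  rw [← Finset.nonempty_iff_ne_empty, ← Finset.card_pos, hcard']
  omega

lemma card_filter_facesDim_between {K : SComplex V} {i : ℕ} (hi : i ≠ 0) {σ τ : Finset V}
    (hσ : σ ∈ K.facesDim i) (hτ : τ ⊆ σ) :
    ((K.facesDim (i - 1)).filter (fun ρ => τ ⊆ ρ ∧ ρ ⊆ σ)).card = (σ \ τ).card := by
  have hcodim : ∀ ρ ∈ K.facesDim (i - 1), ρ ⊆ σ → ρ.card + 1 = σ.card := by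
    intro ρ hρ _
    rw [(mem_facesDim.1 hρ).2, (mem_facesDim.1 hσ).2]
    omega
  suffices h : (K.facesDim (i - 1)).filter (fun ρ => τ ⊆ ρ ∧ ρ ⊆ σ) = (σ \ τ).image σ.erase by
    rw [h, Finset.card_image_of_injOn ((Finset.erase_injOn σ).mono Finset.sdiff_subset)]
  ext ρ
  simp only [Finset.mem_filter, Finset.mem_image, Finset.mem_sdiff]
  constructor
  · rintro ⟨hρ, hτρ, hρσ⟩
    obtain ⟨v, hvρ, rfl⟩ := Finset.exists_eq_insert_iff.2 ⟨hρσ, hcodim ρ hρ hρσ⟩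
    exact ⟨v, ⟨Finset.mem_insert_self v ρ, fun hvτ => hvρ (hτρ hvτ)⟩,
      Finset.erase_insert hvρ⟩
  · rintro ⟨v, ⟨hvσ, hvτ⟩, rfl⟩
    refine ⟨erase_mem_facesDim hi hσ hvσ, fun x hx => ?_, Finset.erase_subset v σ⟩
    exact Finset.mem_erase.2 ⟨fun hxv => hvτ (hxv ▸ hx), hτ hx⟩

/-- Each `i`-face `σ ⊇ τ` is counted twice, once for each vertex of `σ \ τ`. For `τ = ∅` this
says that `∂_1 c` has an even number of vertices; otherwise it is `∂ ∂ = 0` at `τ`. -/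
lemma sum_boundary_of_superset_eq_zero (K : SComplex V) {i : ℕ} (hi : i ≠ 0) (c : Chains K i)
    {τ : Finset V} (hτ : τ.card + 1 = i) :
    ∑ ρ : {ρ // ρ ∈ K.facesDim (i - 1)}, (if τ ⊆ ρ then K.boundary i c ρ else 0) = 0 := by
  simp_rw [boundary_apply K hi, Finset.ite_sum_zero, ← ite_and]
  rw [Finset.sum_comm]
  refine Finset.sum_eq_zero fun σ _ => ?_
  rw [Finset.sum_coe_sort (K.facesDim (i - 1)) (fun ρ => if τ ⊆ ρ ∧ ρ ⊆ σ then c σ else 0),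
    ← Finset.sum_filter, Finset.sum_const]
  by_cases hτσ : τ ⊆ σ
  · have hcard : ((σ : Finset V) \ τ).card = 2 := by
      rw [Finset.card_sdiff_of_subset hτσ, (mem_facesDim.1 σ.2).2]
      omega
    rw [card_filter_facesDim_between hi σ.2 hτσ, hcard, two_nsmul, CharTwo.add_self_eq_zero]
  · rw [Finset.filter_false_of_mem fun ρ _ h => hτσ (h.1.trans h.2), Finset.card_empty,
      zero_smul]

lemma facesDim_zero_nonempty (K : SComplex V) : (K.facesDim 0).Nonempty := by
  obtain ⟨σ, hσ⟩ := K.nonempty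
  obtain ⟨v, hv⟩ := Finset.nonempty_iff_ne_empty.2 (K.no_empty σ hσ)
  exact ⟨{v}, mem_facesDim.2 ⟨K.down_closed σ hσ {v} (Finset.singleton_subset_iff.2 hv)
    (Finset.singleton_ne_empty v), Finset.card_singleton v⟩⟩

lemma fnum_one_lt_fnum_zero (K : SComplex V) (hker : LinearMap.ker (K.boundary 1) = ⊥) :
    K.fnum 1 < K.fnum 0 := by
  let ε : Chains K 0 →ₗ[ZMod 2] ZMod 2 := ∑ ρ, LinearMap.proj ρ
  have hε : ∀ x, ε x = ∑ ρ, x ρ := fun x => by simp [ε]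
  have hrange : LinearMap.range (K.boundary 1) ≤ LinearMap.ker ε := by
    rintro _ ⟨c, rfl⟩
    rw [LinearMap.mem_ker, hε]
    simpa using K.sum_boundary_of_superset_eq_zero one_ne_zero c (τ := ∅) rfl
  have hε_ne : LinearMap.ker ε ≠ ⊤ := by
    obtain ⟨v, hv⟩ := K.facesDim_zero_nonempty
    rw [Ne, LinearMap.ker_eq_top]
    intro h
    have := hε (Pi.single ⟨v, hv⟩ 1)
    simp [h] at this
  calc K.fnum 1 = Module.finrank (ZMod 2) (LinearMap.range (K.boundary 1)) := by
        rw [LinearMap.finrank_range_of_inj (LinearMap.ker_eq_bot.1 hker), finrank_chains]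
    _ ≤ Module.finrank (ZMod 2) (LinearMap.ker ε) := Submodule.finrank_mono hrange
    _ < Module.finrank (ZMod 2) (Chains K 0) := Submodule.finrank_lt hε_ne
    _ = K.fnum 0 := finrank_chains K 0

lemma fnum_le_finrank_ker_skeleton (K : SComplex V) {d : ℕ} (hd : 2 ≤ d)
    (hker : LinearMap.ker (K.boundary d) = ⊥) :
    K.fnum d ≤
      Module.finrank (ZMod 2) (LinearMap.ker ((K.skeleton (d - 1)).boundary (d - 1))) := by
  set S := K.skeleton (d - 1)
  let e : {ρ // ρ ∈ S.facesDim (d - 1)} ≃ {ρ // ρ ∈ K.facesDim (d - 1)} :=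
    Equiv.subtypeEquivRight fun ρ => by rw [skeleton_facesDim]
  let E := LinearEquiv.funCongrLeft (ZMod 2) (ZMod 2) e
  have hcycle : ∀ c, E (K.boundary d c) ∈ LinearMap.ker (S.boundary (d - 1)) := by
    intro c
    rw [LinearMap.mem_ker]
    funext τ
    rw [boundary_apply S (by omega)]
    have hτ : (τ : Finset V).card + 1 = d := by
      have := (mem_facesDim.1 τ.2).2
      omega
    exact (e.sum_comp fun ρ => if (τ : Finset V) ⊆ ρ then K.boundary d c ρ else 0).trans
      (K.sum_boundary_of_superset_eq_zero (by omega) c hτ)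
  let Φ := (E.toLinearMap ∘ₗ K.boundary d).codRestrict _ hcycle
  have hΦ : Function.Injective Φ := fun a b hab =>
    LinearMap.ker_eq_bot.1 hker (E.injective (congrArg Subtype.val hab))
  rw [← finrank_chains]
  exact LinearMap.finrank_le_finrank_of_injective hΦ

lemma exists_ne_superset_of_mem_ker {L : SComplex V} {e : ℕ} (he : e ≠ 0) {c : Chains L e}
    (hc : c ∈ LinearMap.ker (L.boundary e)) {σ : {σ // σ ∈ L.facesDim e}} (hσ : c σ ≠ 0)
    (τ : {τ // τ ∈ L.facesDim (e - 1)}) (hτσ : (τ : Finset V) ⊆ σ) :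
    ∃ ρ, ρ ≠ σ ∧ c ρ ≠ 0 ∧ (τ : Finset V) ⊆ ρ := by
  by_contra! h
  have h0 := congrFun (LinearMap.mem_ker.1 hc) τ
  rw [boundary_apply L he, Finset.sum_eq_single σ _ (by simp), if_pos hτσ] at h0
  · exact hσ h0
  · exact fun ρ _ hρ => ite_eq_right_iff.2 fun hτρ => by_contra fun hcρ => h ρ hρ hcρ hτρ

/-- A face `σ` of a nonzero cycle shares each of its facets with another face of the cycle, and
distinct facets need distinct neighbours. -/
lemma add_two_le_suppCard_of_mem_ker {L : SComplex V} {e : ℕ} (he : e ≠ 0) {c : Chains L e}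
    (hc : c ∈ LinearMap.ker (L.boundary e)) (hne : c ≠ 0) : e + 2 ≤ suppCard c := by
  obtain ⟨σ, hσ⟩ := Function.ne_iff.1 hne
  have hσcard := (mem_facesDim.1 σ.2).2
  have hfacet : ∀ v ∈ (σ : Finset V), ∃ ρ, ρ ≠ σ ∧ c ρ ≠ 0 ∧ (σ : Finset V).erase v ⊆ ρ :=
    fun v hv => exists_ne_superset_of_mem_ker he hc hσ ⟨_, erase_mem_facesDim he σ.2 hv⟩
      (Finset.erase_subset v σ)
  have : Nonempty {σ // σ ∈ L.facesDim e} := ⟨σ⟩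
  choose! f hfσ hfc hfsub using hfacet
  have hinj : Set.InjOn f ((σ : Finset V) : Set V) := by
    intro v hv w hw hfvw
    by_contra hvw
    have hsub := Finset.subset_of_erase_subset_of_erase_subset hvw (hfsub v hv)
      (hfvw ▸ hfsub w hw)
    refine hfσ v hv (Subtype.ext (Finset.eq_of_subset_of_card_le hsub ?_).symm)
    rw [hσcard, (mem_facesDim.1 (f v).2).2]
  have hcard := Finset.card_le_card_of_injOn
    (t := (Finset.univ.filter fun ρ => c ρ ≠ 0).erase σ) f
    (fun v hv => by simp [hfσ v hv, hfc v hv]) hinj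
  rw [Finset.card_erase_of_mem (by simpa using hσ), hσcard] at hcard
  unfold suppCard
  omega

end SComplex

open SComplex
/-- Corollary 8. -/
theorem cor8 {V : Type} [DecidableEq V] [Fintype V] (d : ℕ) (hd : 1 ≤ d)
    (K : SComplex V) (hdim : K.IsDim d) (hβ : K.betti d = 0)
    (hcb : (K.skeleton (d - 1)).HasCompleteBasis (d - 1) 2) :
    (d + 1) * (K.fnum d + 1) ≤ 2 * K.fnum (d - 1) := by
  have hker := ker_boundary_eq_bot_of_betti_eq_zero hdim hβ
  have hfd := fnum_pos_of_isDim hdim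
  obtain rfl | hd2 : d = 1 ∨ 2 ≤ d := by omega
  · have := fnum_one_lt_fnum_zero K hker
    simp only [Nat.sub_self]
    omega
  · obtain ⟨ι, _, b, hb⟩ := hcb
    have hrank := fnum_le_finrank_ker_skeleton K hd2 hker
    rw [Module.finrank_eq_card_basis b] at hrank
    have : Nonempty ι := Fintype.card_pos_iff.1 (by omega)
    have hcount := mul_card_add_one_le_of_basis_covers_twice b (k := d + 1)
      (fun w hw hw0 => (show d + 1 = d - 1 + 2 by omega) ▸
        add_two_le_suppCard_of_mem_ker (by omega) hw hw0)
      hb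
    rw [Fintype.card_coe, ← fnum, fnum_skeleton] at hcount
    calc (d + 1) * (K.fnum d + 1) ≤ (d + 1) * (Fintype.card ι + 1) := by gcongr
      _ ≤ 2 * K.fnum (d - 1) := hcount
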